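/- arXiv:1609.04262 — 5 statements merged into one kernel-verified Lean document; each statement's English description precedes it below -/
import Mathlib

section
/- Let α be an algebraic number of degree D over ℚ with (absolute logarithmic Weil) height h(α). Then for every nonzero polynomial P ∈ ℤ[z] of degree d with P(α) ≠ 0, one has log|P(α)| ≥ -D·d·h(α) - (D-1)·log‖P‖ - D·log(d+1), where ‖P‖ denotes the maximum of the absolute values of the coefficients of P. -/
/-- The height of an integer polynomial: the maximum of the absolute values of
its coefficients. -/
noncomputable def polyHeightZ (P : Polynomial ℤ) : ℕ :=
  P.support.sup fun i => (P.coeff i).natAbs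

/-- The Mahler measure of a complex polynomial:
`|leading coefficient| * ∏ max (1, |root|)`. -/
noncomputable def mahlerMeasureC (q : Polynomial ℂ) : ℝ :=
  ‖q.leadingCoeff‖ * ((q.roots.map fun r => max 1 ‖r‖).prod)

/-!
The resultant `Res(q, P) = lc(q)^d ∏_{q(r)=0} P(r)` is an integer. It is nonzero: by
minimality of `D` and Gauss's lemma `q` is irreducible over `ℚ`, so `P`, which does not vanish
at `α`, vanishes at no conjugate of `α`. Hence `1 ≤ |Res(q, P)|`. Bounding
`|P(r)| ≤ (d+1)‖P‖ max(1,|r|)^d` at the other `D - 1` roots `r` of `q` and absorbing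
`|lc(q)|^d ∏ max(1,|r|)^d` into `M(q)^d` gives `1 ≤ |P(α)| ((d+1)‖P‖)^(D-1) M(q)^d`;
take logarithms, using `log M(q) = D h(α)`.
-/

open Polynomial

theorem Polynomial.IsPrimitive.irreducible_of_forall_natDegree_le
    {R A : Type*} [CommRing R] [IsDomain R] [CommRing A] [IsDomain A] [Algebra R A]
    {q : R[X]} (hq : q.IsPrimitive) (hdeg : 0 < q.natDegree) {α : A} (hα : aeval α q = 0)
    (hmin : ∀ q' : R[X], q' ≠ 0 → aeval α q' = 0 → q.natDegree ≤ q'.natDegree) :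
    Irreducible q := by
  have isUnit_of_factor : ∀ f g, q = f * g → aeval α f = 0 → IsUnit g := by
    intro f g hfg hf
    have hf0 : f ≠ 0 := by rintro rfl; exact hq.ne_zero (by simpa using hfg)
    have hg0 : g ≠ 0 := by rintro rfl; exact hq.ne_zero (by simpa using hfg)
    have hg : g.natDegree = 0 := by
      have := natDegree_mul hf0 hg0
      have := hmin f hf0 hf
      rw [← hfg] at *
      omega
    rw [eq_C_of_natDegree_eq_zero hg] at hfg ⊢
    exact isUnit_C.mpr (hq _ ⟨f, by rw [hfg, mul_comm]⟩)
  refine ⟨not_isUnit_of_natDegree_pos q hdeg, fun f g hfg => ?_⟩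
  have : aeval α f * aeval α g = 0 := by rw [← map_mul, ← hfg, hα]
  rcases mul_eq_zero.mp this with hf | hg
  · exact Or.inr (isUnit_of_factor f g hfg hf)
  · exact Or.inl (isUnit_of_factor g f (hfg.trans (mul_comm f g)) hg)

theorem Irreducible.aeval_ne_zero_of_aeval_ne_zero {K L : Type*} [Field K] [CommRing L]
    [Nontrivial L] [Algebra K L] {p f : K[X]} (hp : Irreducible p) {α r : L}
    (hpα : aeval α p = 0) (hpr : aeval r p = 0) (hfα : aeval α f ≠ 0) : aeval r f ≠ 0 := by
  intro hfr
  have hndvd : ¬p ∣ f := fun ⟨s, hs⟩ => hfα (by rw [hs, map_mul, hpα, zero_mul])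
  obtain ⟨u, v, huv⟩ := hp.coprime_iff_not_dvd.mpr hndvd
  simpa [hpr, hfr] using congrArg (aeval r) huv

theorem intCast_resultant_eq_leadingCoeff_pow_mul_prod_roots {K : Type*} [Field K]
    [IsAlgClosed K] [CharZero K] (q P : ℤ[X]) {d : ℕ} (hd : P.natDegree ≤ d) :
    ((resultant q P q.natDegree d : ℤ) : K) =
      (q.leadingCoeff : K) ^ d *
        ((q.map (Int.castRingHom K)).roots.map fun r => aeval r P).prod := by
  have := resultant_eq_prod_eval (q.map (Int.castRingHom K)) (P.map (Int.castRingHom K)) d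
    (natDegree_map_le.trans hd) (IsAlgClosed.splits _)
  rw [resultant_map_map, natDegree_map_eq_of_injective Int.cast_injective,
    leadingCoeff_map_of_injective Int.cast_injective] at this
  simpa [← algebraMap_int_eq, eval_map_algebraMap] using this

theorem abs_coeff_le_polyHeightZ (P : ℤ[X]) (i : ℕ) : |P.coeff i| ≤ polyHeightZ P := by
  by_cases h : P.coeff i = 0
  · simp [h]
  · rw [Int.abs_eq_natAbs, Nat.cast_le]
    exact Finset.le_sup (f := fun i => (P.coeff i).natAbs) (mem_support_iff.mpr h)

theorem one_le_polyHeightZ {P : ℤ[X]} (hP : P ≠ 0) : 1 ≤ polyHeightZ P := by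
  obtain ⟨i, hi⟩ := support_nonempty.mpr hP
  have := abs_coeff_le_polyHeightZ P i
  have := Int.one_le_abs (mem_support_iff.mp hi)
  omega

theorem norm_aeval_le_polyHeightZ (P : ℤ[X]) {d : ℕ} (hd : P.natDegree ≤ d) (r : ℂ) :
    ‖aeval r P‖ ≤ ((d : ℝ) + 1) * polyHeightZ P * max 1 ‖r‖ ^ d := by
  have hterm : ∀ i ∈ Finset.range (P.natDegree + 1),
      ‖P.coeff i • r ^ i‖ ≤ (polyHeightZ P : ℝ) * max 1 ‖r‖ ^ d := by
    intro i hi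
    rw [zsmul_eq_mul, norm_mul, norm_pow, Complex.norm_intCast]
    have hi : i ≤ d := by have := Finset.mem_range.mp hi; omega
    gcongr
    · exact_mod_cast abs_coeff_le_polyHeightZ P i
    · exact (pow_le_pow_left₀ (norm_nonneg r) (le_max_right 1 ‖r‖) i).trans
        (pow_le_pow_right₀ (le_max_left 1 ‖r‖) hi)
  calc ‖aeval r P‖ ≤ ∑ i ∈ Finset.range (P.natDegree + 1), ‖P.coeff i • r ^ i‖ := by
        rw [aeval_eq_sum_range]; exact norm_sum_le _ _
    _ ≤ (P.natDegree + 1) * (polyHeightZ P * max 1 ‖r‖ ^ d) := by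
        simpa using Finset.sum_le_sum hterm
    _ ≤ (d + 1) * polyHeightZ P * max 1 ‖r‖ ^ d := by
        rw [← mul_assoc]; gcongr

theorem mahlerMeasureC_pos {p : ℂ[X]} (hp : p ≠ 0) : 0 < mahlerMeasureC p :=
  mul_pos (norm_pos_iff.mpr (leadingCoeff_ne_zero.mpr hp))
    (Multiset.prod_pos fun _ hx => by
      obtain ⟨r, -, rfl⟩ := Multiset.mem_map.mp hx
      exact lt_max_of_lt_left one_pos)

theorem norm_leadingCoeff_mul_prod_le_mahlerMeasureC {p : ℂ[X]} {α : ℂ} {R : Multiset ℂ}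
    (hR : p.roots = α ::ₘ R) :
    ‖p.leadingCoeff‖ * (R.map fun r => max 1 ‖r‖).prod ≤ mahlerMeasureC p := by
  rw [mahlerMeasureC, hR, Multiset.map_cons, Multiset.prod_cons]
  gcongr
  refine le_mul_of_one_le_left (Multiset.prod_nonneg fun _ hx => ?_) (le_max_left _ _)
  obtain ⟨r, -, rfl⟩ := Multiset.mem_map.mp hx
  positivity

theorem prod_norm_aeval_le {P : ℤ[X]} {d : ℕ} (hd : P.natDegree ≤ d) (R : Multiset ℂ) :
    (R.map fun r => ‖aeval r P‖).prod ≤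
      (((d : ℝ) + 1) * polyHeightZ P) ^ R.card * (R.map fun r => max 1 ‖r‖).prod ^ d := by
  calc _ ≤ (R.map fun r => ((d : ℝ) + 1) * polyHeightZ P * max 1 ‖r‖ ^ d).prod :=
        Multiset.prod_map_le_prod_map₀ _ _ (fun _ _ => norm_nonneg _)
          (fun r _ => norm_aeval_le_polyHeightZ P hd r)
    _ = _ := by
        rw [Multiset.prod_map_mul, Multiset.map_const', Multiset.prod_replicate,
          Multiset.prod_map_pow]

theorem one_le_norm_aeval_mul {q P : ℤ[X]} (hq : q ≠ 0) {d : ℕ} (hd : P.natDegree ≤ d)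
    {α : ℂ} (hα : aeval α q = 0) (hP : ∀ r : ℂ, aeval r q = 0 → aeval r P ≠ 0) :
    1 ≤ ‖aeval α P‖ * (((d : ℝ) + 1) * polyHeightZ P) ^ (q.natDegree - 1) *
      mahlerMeasureC (q.map (Int.castRingHom ℂ)) ^ d := by
  have mem_roots_iff (r : ℂ) : r ∈ (q.map (Int.castRingHom ℂ)).roots ↔ aeval r q = 0 := by
    rw [← algebraMap_int_eq, ← aroots_def, mem_aroots, and_iff_right hq]
  set qC := q.map (Int.castRingHom ℂ)
  obtain ⟨R, hR⟩ := Multiset.exists_cons_of_mem ((mem_roots_iff α).mpr hα)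
  have hcard : R.card = q.natDegree - 1 := by
    have := IsAlgClosed.card_roots_eq_natDegree (p := qC)
    rw [hR, Multiset.card_cons, natDegree_map_eq_of_injective Int.cast_injective] at this
    omega
  have hres := intCast_resultant_eq_leadingCoeff_pow_mul_prod_roots (K := ℂ) q P hd
  have hres0 : resultant q P q.natDegree d ≠ 0 := by
    rw [← Int.cast_ne_zero (α := ℂ), hres]
    refine mul_ne_zero (pow_ne_zero _ (Int.cast_ne_zero.mpr (leadingCoeff_ne_zero.mpr hq)))
      (Multiset.prod_ne_zero fun h0 => ?_)
    obtain ⟨r, hr, hr0⟩ := Multiset.mem_map.mp h0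
    exact hP r ((mem_roots_iff r).mp hr) hr0
  have hmax : 0 ≤ (R.map fun r => max 1 ‖r‖).prod :=
    Multiset.prod_nonneg fun _ hx => by
      obtain ⟨r, -, rfl⟩ := Multiset.mem_map.mp hx
      positivity
  have hlc : ‖qC.leadingCoeff‖ = ‖(q.leadingCoeff : ℂ)‖ := by
    rw [leadingCoeff_map_of_injective Int.cast_injective]; rfl
  have hnorm : ‖(R.map fun r => aeval r P).prod‖ = (R.map fun r => ‖aeval r P‖).prod := by
    simpa [Multiset.map_map] using
      map_multiset_prod (normHom : ℂ →*₀ ℝ) (R.map fun r => aeval r P)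
  calc (1 : ℝ) ≤ ‖((resultant q P q.natDegree d : ℤ) : ℂ)‖ := by
        rw [Complex.norm_intCast]; exact_mod_cast Int.one_le_abs hres0
    _ = ‖aeval α P‖ * (‖qC.leadingCoeff‖ ^ d * (R.map fun r => ‖aeval r P‖).prod) := by
        rw [hres, hR, Multiset.map_cons, Multiset.prod_cons, norm_mul, norm_pow, norm_mul, hlc,
          hnorm]
        ring
    _ ≤ ‖aeval α P‖ * (‖qC.leadingCoeff‖ ^ d *
          ((((d : ℝ) + 1) * polyHeightZ P) ^ R.card *
            (R.map fun r => max 1 ‖r‖).prod ^ d)) := by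
        gcongr; exact prod_norm_aeval_le hd R
    _ = ‖aeval α P‖ * (((d : ℝ) + 1) * polyHeightZ P) ^ R.card *
          (‖qC.leadingCoeff‖ * (R.map fun r => max 1 ‖r‖).prod) ^ d := by ring
    _ ≤ _ := by
        rw [hcard]
        gcongr
        exact norm_leadingCoeff_mul_prod_le_mahlerMeasureC hR

/-- Liouville's inequality for an algebraic number `α` of degree `D` with absolute
logarithmic Weil height `h` (expressed via the Mahler measure of the primitive
integer minimal polynomial `q` of `α`). -/
theorem liouville_algebraic (α : ℂ) (D : ℕ) (hD : 0 < D)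
    (q : Polynomial ℤ) (hq0 : q ≠ 0) (hqprim : q.IsPrimitive)
    (hqroot : Polynomial.aeval α q = 0)
    (hqdeg : q.natDegree = D)
    (hqmin : ∀ q' : Polynomial ℤ, q' ≠ 0 → Polynomial.aeval α q' = 0 → D ≤ q'.natDegree)
    (h : ℝ)
    (hdef : h = (D : ℝ)⁻¹ * Real.log (mahlerMeasureC (q.map (Int.castRingHom ℂ))))
    (P : Polynomial ℤ) (hP : P ≠ 0) (d : ℕ) (hd : P.natDegree = d)
    (hPα : Polynomial.aeval α P ≠ 0) :
    Real.log ‖Polynomial.aeval α P‖ ≥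
      -(D : ℝ) * d * h - ((D : ℝ) - 1) * Real.log (polyHeightZ P)
        - (D : ℝ) * Real.log (d + 1) := by
  subst hqdeg
  have hcast : ∀ (f : ℤ[X]) (r : ℂ), aeval r (f.map (Int.castRingHom ℚ)) = aeval r f :=
    fun f r => by rw [← algebraMap_int_eq, aeval_map_algebraMap]
  have hirr : Irreducible (q.map (Int.castRingHom ℚ)) :=
    (IsPrimitive.Int.irreducible_iff_irreducible_map_cast hqprim).mp
      (hqprim.irreducible_of_forall_natDegree_le hD hqroot hqmin)
  have hconj (r : ℂ) (hr : aeval r q = 0) : aeval r P ≠ 0 := by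
    have := hirr.aeval_ne_zero_of_aeval_ne_zero (α := α) (r := r)
      (f := P.map (Int.castRingHom ℚ)) (by rwa [hcast]) (by rwa [hcast]) (by rwa [hcast])
    rwa [hcast] at this
  have key := one_le_norm_aeval_mul hq0 hd.le hqroot hconj
  have hH : (0 : ℝ) < polyHeightZ P := by exact_mod_cast one_le_polyHeightZ hP
  have hM := mahlerMeasureC_pos ((Polynomial.map_ne_zero_iff (f := Int.castRingHom ℂ)
    Int.cast_injective).mpr hq0)
  have hlog := Real.log_nonneg key
  rw [Real.log_mul (by positivity) (by positivity), Real.log_mul (norm_ne_zero_iff.mpr hPα)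
    (by positivity), Real.log_pow, Real.log_pow, Real.log_mul (by positivity) hH.ne',
    Nat.cast_pred hD] at hlog
  have hDh : (q.natDegree : ℝ) * d * h =
      d * Real.log (mahlerMeasureC (q.map (Int.castRingHom ℂ))) := by
    rw [hdef]; field_simp
  have hd1 : 0 ≤ Real.log (d + 1) := Real.log_nonneg (by linarith [d.cast_nonneg (α := ℝ)])
  linarith
end

section
/- There exists a constant C > 0 (depending only on r) such that for every ε > 0 and every nonzero polynomial P ∈ ℂ[z] of degree d ≥ 1, the Lebesgue measure (area) of the set { z ∈ Δ_r : |P(z)| ≤ ε · sup_{|w|≤r} |P(w)| } is at most C · d · ε^{2/d}. -/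
/-!
Write `P = c ∏ (z - a)` over its roots and put `t = ε ^ (1/d)`. Since `|z - a| ≤ r + |a|` on
the closed disk, `‖P‖_r ≤ |c| ∏ (r + |a|)`, so `|P z| ≤ ε ‖P‖_r = |c| ∏ t (r + |a|)` forces
`|z - a| ≤ t (r + |a|)` for some root `a`. The disk of that radius around `a` meets `Δ_r` inside
a disk of radius `3 r t`: if `|a| ≤ 2 r` its radius is already at most `3 r t`, and otherwise it
meets `Δ_r` only when `t ≥ 1/3`. Summing over the at most `d` roots gives `9 π r² d t²`.
-/

open MeasureTheory Metric

/-- The sup of `|P(z)|` over the closed disk of radius `r`. -/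
noncomputable def supAbsPoly (P : Polynomial ℂ) (r : ℝ) : ℝ :=
  ⨆ z : closedBall (0 : ℂ) r, ‖P.eval z.1‖

open Polynomial Real

namespace Polynomial

variable {K : Type*} [NormedField K] {P : K[X]}

theorem Splits.norm_eval_eq_prod_roots (hP : P.Splits) (z : K) :
    ‖P.eval z‖ = ‖P.leadingCoeff‖ * (P.roots.map fun a => ‖z - a‖).prod := by
  rw [hP.eval_eq_prod_roots, norm_mul]
  exact congrArg _ (Multiset.prod_hom' _ (normHom : K →*₀ ℝ) _).symm

theorem Splits.norm_eval_le_prod_roots (hP : P.Splits) {z : K} {r : ℝ} (hz : ‖z‖ ≤ r) :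
    ‖P.eval z‖ ≤ ‖P.leadingCoeff‖ * (P.roots.map fun a => r + ‖a‖).prod := by
  rw [hP.norm_eval_eq_prod_roots]
  gcongr
  refine Multiset.prod_map_le_prod_map₀ _ _ (fun a _ => norm_nonneg _) fun a _ => ?_
  linarith [norm_sub_le z a]

end Polynomial

theorem supAbsPoly_le_prod_roots (P : ℂ[X]) {r : ℝ} (hr : 0 ≤ r) :
    supAbsPoly P r ≤ ‖P.leadingCoeff‖ * (P.roots.map fun a => r + ‖a‖).prod := by
  have : Nonempty (closedBall (0 : ℂ) r) := ⟨⟨0, mem_closedBall_self hr⟩⟩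
  refine ciSup_le fun z => (IsAlgClosed.splits P).norm_eval_le_prod_roots ?_
  exact mem_closedBall_zero_iff.1 z.2

theorem exists_root_norm_sub_le_of_norm_eval_le {P : ℂ[X]} (hd : 0 < P.natDegree) {r t : ℝ}
    (hr : 0 < r) (ht : 0 < t) {z : ℂ} (hz : ‖P.eval z‖ ≤ t ^ P.natDegree * supAbsPoly P r) :
    ∃ a ∈ P.roots, ‖z - a‖ ≤ t * (r + ‖a‖) := by
  by_contra! hfar
  have hroots : P.roots ≠ 0 := by
    rw [← Multiset.card_pos, IsAlgClosed.card_roots_eq_natDegree]; exact hd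
  have hlt := Multiset.prod_map_lt_prod_map hroots _ _
    (fun a _ => by positivity) hfar
  rw [Multiset.prod_map_mul, Multiset.map_const', Multiset.prod_replicate,
    IsAlgClosed.card_roots_eq_natDegree] at hlt
  have hc : 0 < ‖P.leadingCoeff‖ := by
    simpa using Polynomial.ne_zero_of_natDegree_gt hd
  have hcontra := calc
    ‖P.leadingCoeff‖ * (t ^ P.natDegree * (P.roots.map fun a => r + ‖a‖).prod)
        < ‖P.leadingCoeff‖ * (P.roots.map fun a => ‖z - a‖).prod := by gcongr
    _ = ‖P.eval z‖ := ((IsAlgClosed.splits P).norm_eval_eq_prod_roots z).symm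
    _ ≤ t ^ P.natDegree * supAbsPoly P r := hz
    _ ≤ t ^ P.natDegree * (‖P.leadingCoeff‖ * (P.roots.map fun a => r + ‖a‖).prod) := by
        gcongr; exact supAbsPoly_le_prod_roots P hr.le
  exact hcontra.ne (by ring)

theorem exists_ball_zero_inter_closedBall_subset {E : Type*} [SeminormedAddCommGroup E] (w : E)
    {r t : ℝ} (ht : 0 ≤ t) :
    ∃ c : E, ball (0 : E) r ∩ closedBall w (t * (r + ‖w‖)) ⊆ closedBall c (3 * r * t) := by
  by_cases hw : ‖w‖ ≤ 2 * r
  · exact ⟨w, closedBall_subset_closedBall (by nlinarith) |>.trans' Set.inter_subset_right⟩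
  · refine ⟨0, fun z ⟨hz, hzw⟩ => ?_⟩
    rw [mem_ball_zero_iff] at hz
    rw [mem_closedBall_iff_norm] at hzw
    rw [mem_closedBall_zero_iff]
    nlinarith [norm_nonneg z, norm_sub_norm_le w z, norm_sub_rev w z]

theorem volume_ball_zero_inter_closedBall_le (w : ℂ) {r t : ℝ} (hr : 0 ≤ r) (ht : 0 ≤ t) :
    volume (ball (0 : ℂ) r ∩ closedBall w (t * (r + ‖w‖))) ≤
      ENNReal.ofReal (9 * π * r ^ 2 * t ^ 2) := by
  obtain ⟨c, hc⟩ := exists_ball_zero_inter_closedBall_subset w (r := r) ht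
  calc _ ≤ volume (closedBall c (3 * r * t)) := measure_mono hc
    _ = ENNReal.ofReal (9 * π * r ^ 2 * t ^ 2) := by
      rw [Complex.volume_closedBall, ← ENNReal.ofReal_pow (by positivity),
        ← ENNReal.ofReal_coe_nnreal, ← ENNReal.ofReal_mul (by positivity), NNReal.coe_real_pi]
      ring_nf

/-- Area estimate: the set of points of the disk of radius `r` where a degree-`d`
polynomial is at most `ε` times its sup norm has area at most `C·d·ε^{2/d}`. -/
theorem area_of_small_values_poly (r : ℝ) (hr : 0 < r) :
    ∃ C > (0 : ℝ), ∀ ε : ℝ, 0 < ε → ∀ P : Polynomial ℂ, P ≠ 0 → 1 ≤ P.natDegree →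
      volume {z : ℂ | ‖z‖ < r ∧
          ‖P.eval z‖ ≤ ε * supAbsPoly P r}
        ≤ ENNReal.ofReal (C * P.natDegree * ε ^ ((2 : ℝ) / P.natDegree)) := by
  refine ⟨9 * π * r ^ 2, by positivity, fun ε hε P _ hd => ?_⟩
  set d := P.natDegree
  set t := ε ^ ((d : ℝ)⁻¹)
  have ht : 0 < t := rpow_pos_of_pos hε _
  have htd : t ^ d = ε := rpow_inv_natCast_pow hε.le (by omega)
  have ht2 : t ^ 2 = ε ^ ((2 : ℝ) / d) := by
    rw [← rpow_natCast, ← rpow_mul hε.le]; ring_nf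
  have hcover : {z : ℂ | ‖z‖ < r ∧ ‖P.eval z‖ ≤ ε * supAbsPoly P r} ⊆
      ⋃ a ∈ P.roots.toFinset, ball 0 r ∩ closedBall a (t * (r + ‖a‖)) := by
    rintro z ⟨hzr, hz⟩
    rw [← htd] at hz
    obtain ⟨a, ha, hza⟩ := exists_root_norm_sub_le_of_norm_eval_le hd hr ht hz
    exact Set.mem_biUnion (Multiset.mem_toFinset.2 ha)
      ⟨mem_ball_zero_iff.2 hzr, mem_closedBall_iff_norm.2 hza⟩
  calc _ ≤ ∑ a ∈ P.roots.toFinset, volume (ball (0 : ℂ) r ∩ closedBall a (t * (r + ‖a‖))) :=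
        (measure_mono hcover).trans (measure_biUnion_finset_le _ _)
    _ ≤ ∑ a ∈ P.roots.toFinset, ENNReal.ofReal (9 * π * r ^ 2 * t ^ 2) :=
        Finset.sum_le_sum fun a _ => volume_ball_zero_inter_closedBall_le a hr.le ht.le
    _ ≤ d * ENNReal.ofReal (9 * π * r ^ 2 * t ^ 2) := by
        rw [Finset.sum_const, nsmul_eq_mul]
        gcongr
        exact_mod_cast (Multiset.toFinset_card_le _).trans (card_roots' P)
    _ = _ := by
        rw [← ENNReal.ofReal_natCast, ← ENNReal.ofReal_mul (by positivity), ← ht2]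
        ring_nf
end

section
/- If A ⊆ ℂ is a measurable subset of the disk Δ_r of planar Lebesgue measure V, and n ≥ 1, then there exist n points x_1, …, x_n ∈ A such that |x_i - x_j| ≥ sqrt(V/(π·n)) for all i ≠ j. -/
/-!
Greedy packing: if `k` points of `A` have been chosen, the `k` open balls of radius `δ` around
them have total area at most `k · π δ²`. For `δ = √(V/(π n))` and `k < n` this is `k V / n < V`,
so the balls do not cover `A` and there is a further point of `A` at distance at least `δ` from
all chosen ones.
-/

open MeasureTheory Metric
open scoped ENNReal

theorem Fin.pairwise_cons {α : Type*} {r : α → α → Prop} (hr : ∀ p q, r p q → r q p) {m : ℕ}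
    {x : Fin m → α} {a : α} (hx : Pairwise fun i j ↦ r (x i) (x j)) (ha : ∀ i, r a (x i)) :
    Pairwise fun i j ↦ r ((Fin.cons a x : Fin (m + 1) → α) i)
      ((Fin.cons a x : Fin (m + 1) → α) j) := by
  intro i j hij
  cases i using Fin.cases <;> cases j using Fin.cases
  · exact absurd rfl hij
  · exact ha _
  · exact hr _ _ (ha _)
  · exact hx (Fin.succ_injective _ |>.ne_iff.mp hij)

section Packing

variable {X : Type*} [PseudoMetricSpace X] [MeasurableSpace X] {μ : Measure X} {A : Set X}
  {δ : ℝ} {b : ℝ≥0∞}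

theorem exists_mem_forall_le_dist_of_mul_lt (hball : ∀ c, μ (ball c δ) ≤ b) {m : ℕ}
    (x : Fin m → X) (hA : m * b < μ A) : ∃ a ∈ A, ∀ i, δ ≤ dist a (x i) := by
  by_contra! hcover
  have hsub : A ⊆ ⋃ i, ball (x i) δ := fun a ha ↦ Set.mem_iUnion.mpr (hcover a ha)
  refine (measure_mono hsub).not_gt (hA.trans_le' ?_)
  calc μ (⋃ i, ball (x i) δ) ≤ ∑ i, μ (ball (x i) δ) := measure_iUnion_fintype_le _ _
    _ ≤ ∑ _ : Fin m, b := Finset.sum_le_sum fun i _ ↦ hball (x i)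
    _ = m * b := by simp

theorem exists_separated_fin_succ_of_mul_lt (hball : ∀ c, μ (ball c δ) ≤ b) (n : ℕ)
    (hA : n * b < μ A) :
    ∃ x : Fin (n + 1) → X, (∀ i, x i ∈ A) ∧ Pairwise fun i j ↦ δ ≤ dist (x i) (x j) := by
  induction n with
  | zero =>
    obtain ⟨a, ha, -⟩ := exists_mem_forall_le_dist_of_mul_lt hball Fin.elim0 hA
    exact ⟨fun _ ↦ a, fun _ ↦ ha, fun i j hij ↦ absurd (Subsingleton.elim (α := Fin 1) i j) hij⟩
  | succ m ih =>
    have hmA : m * b < μ A := hA.trans_le' (by gcongr; simp)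
    obtain ⟨x, hxA, hx⟩ := ih hmA
    obtain ⟨a, ha, hax⟩ := exists_mem_forall_le_dist_of_mul_lt hball x hA
    refine ⟨Fin.cons a x, fun i ↦ ?_, Fin.pairwise_cons (r := fun p q ↦ δ ≤ dist p q)
      (fun p q h ↦ h.trans_eq (dist_comm p q)) hx hax⟩
    cases i using Fin.cases
    exacts [ha, hxA _]

end Packing

theorem Complex.volume_ball_sqrt_div_pi (c : ℂ) {a : ℝ} (ha : 0 ≤ a) :
    volume (ball c √(a / Real.pi)) = ENNReal.ofReal a := by
  rw [Complex.volume_ball, ← ENNReal.ofReal_pow (Real.sqrt_nonneg _),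
    Real.sq_sqrt (by positivity), ← ENNReal.ofReal_coe_nnreal, NNReal.coe_real_pi,
    ← ENNReal.ofReal_mul (by positivity), div_mul_cancel₀ _ Real.pi_ne_zero]

theorem separated_points_in_set_general (A : Set ℂ) (V : ℝ) (hV : V = (volume A).toReal)
    (hVpos : 0 < V) (n : ℕ) :
    ∃ x : Fin n → ℂ, (∀ i, x i ∈ A) ∧
      ∀ i j, i ≠ j → Real.sqrt (V / (Real.pi * n)) ≤ ‖x i - x j‖ := by
  cases n with
  | zero => exact ⟨Fin.elim0, fun i ↦ i.elim0, fun i ↦ i.elim0⟩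
  | succ k =>
    have hVA : volume A = ENNReal.ofReal V := by
      rw [hV, ENNReal.ofReal_toReal]
      intro h
      simp [hV, h] at hVpos
    have hk : (k : ℝ≥0∞) * ENNReal.ofReal (V / (k + 1)) < volume A := by
      rw [hVA, ← ENNReal.ofReal_natCast, ← ENNReal.ofReal_mul (by positivity),
        ENNReal.ofReal_lt_ofReal_iff hVpos, mul_div_assoc', div_lt_iff₀ (by positivity)]
      nlinarith
    have hradius : V / (Real.pi * ↑(k + 1)) = V / (k + 1) / Real.pi := by
      push_cast
      rw [div_div, mul_comm]
    obtain ⟨x, hxA, hx⟩ := exists_separated_fin_succ_of_mul_lt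
      (fun c ↦ (Complex.volume_ball_sqrt_div_pi c (by positivity)).le) k hk
    exact ⟨x, hxA, fun i j hij ↦ hradius ▸ (hx hij).trans_eq (dist_eq_norm _ _)⟩

/-- Packing argument: a measurable subset `A` of the disk of radius `r` of positive
area `V` contains, for every `n ≥ 1`, `n` points which are pairwise at distance
at least `√(V/(π·n))`. -/
theorem separated_points_in_set (r : ℝ) (A : Set ℂ) (hA : MeasurableSet A)
    (hsub : A ⊆ ball (0 : ℂ) r) (V : ℝ) (hV : V = (volume A).toReal)
    (hVpos : 0 < V) (n : ℕ) (hn : 1 ≤ n) :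
    ∃ x : Fin n → ℂ, (∀ i, x i ∈ A) ∧
      ∀ i j, i ≠ j → Real.sqrt (V / (Real.pi * n)) ≤ ‖x i - x j‖ :=
  separated_points_in_set_general A V hV hVpos n
end

section
/- In a nonarchimedean field K: let x_0, …, x_d be d+1 points in the closed ball B_r = {‖z‖ ≤ r} pairwise separated by ‖x_i - x_j‖ ≥ δ > 0, and let P ∈ K[z] of degree ≤ d satisfy ‖P(x_i)‖ ≤ ε·M for all i, where M = sup_{z ∈ B_r} ‖P(z)‖. Then M ≤ ε·M·(r/δ)^d. -/
/-- Nonarchimedean Lagrange interpolation bound: if a polynomial of degree at most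
`d` over a nonarchimedean field is small at `d+1` points of the closed ball of
radius `r` which are pairwise `δ`-separated, then its sup norm `M` on the ball
satisfies `M ≤ ε·M·(r/δ)^d`. -/
theorem nonarch_lagrange_sup_bound (K : Type*) [NontriviallyNormedField K]
    [IsUltrametricDist K] [CompleteSpace K]
    (r δ ε : ℝ) (hr : 0 < r) (hδ : 0 < δ) (hε : 0 < ε)
    (d : ℕ) (P : Polynomial K) (hdeg : P.natDegree ≤ d)
    (x : Fin (d + 1) → K) (hx : ∀ i, ‖x i‖ ≤ r)
    (hinj : Function.Injective x)
    (hsep : ∀ i j, i ≠ j → δ ≤ ‖x i - x j‖)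
    (M : ℝ) (hM : M = ⨆ z : {z : K // ‖z‖ ≤ r}, ‖P.eval z.1‖)
    (hval : ∀ i, ‖P.eval (x i)‖ ≤ ε * M) :
    M ≤ ε * M * (r / δ) ^ d := by
  have hM0 : 0 ≤ M := by
    rw [hM]
    exact Real.iSup_nonneg fun z => norm_nonneg _
  have hC0 : 0 ≤ ε * M * (r / δ) ^ d := by positivity
  -- P equals its Lagrange interpolation at the x i
  have hPL : P = Lagrange.interpolate Finset.univ x fun i => P.eval (x i) := by
    apply Lagrange.eq_interpolate hinj.injOn
    calc P.degree ≤ P.natDegree := Polynomial.degree_le_natDegree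
    _ < (Finset.univ : Finset (Fin (d + 1))).card := by
        rw [Finset.card_univ, Fintype.card_fin]
        exact_mod_cast Nat.lt_succ_of_le hdeg
  -- pointwise bound on the ball
  have key : ∀ z : K, ‖z‖ ≤ r → ‖P.eval z‖ ≤ ε * M * (r / δ) ^ d := by
    intro z hz
    conv_lhs => rw [hPL]
    rw [Lagrange.interpolate_apply, Polynomial.eval_finset_sum]
    apply IsUltrametricDist.norm_sum_le_of_forall_le_of_nonneg hC0
    intro i _
    rw [Polynomial.eval_mul, Polynomial.eval_C, norm_mul]
    have hbasis : ‖(Lagrange.basis Finset.univ x i).eval z‖ ≤ (r / δ) ^ d := by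
      rw [Lagrange.basis, Polynomial.eval_prod]
      have hcard : (Finset.univ.erase i).card = d := by
        rw [Finset.card_erase_of_mem (Finset.mem_univ i), Finset.card_univ, Fintype.card_fin]; omega
      calc ‖∏ j ∈ Finset.univ.erase i, (Lagrange.basisDivisor (x i) (x j)).eval z‖
          = ∏ j ∈ Finset.univ.erase i, ‖(Lagrange.basisDivisor (x i) (x j)).eval z‖ := by
            rw [norm_prod]
        _ ≤ ∏ j ∈ Finset.univ.erase i, (r / δ) := by
            apply Finset.prod_le_prod (fun j _ => norm_nonneg _)
            intro j hj
            have hij : i ≠ j := (Finset.ne_of_mem_erase hj).symm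
            rw [Lagrange.basisDivisor, Polynomial.eval_mul, Polynomial.eval_C,
              Polynomial.eval_sub, Polynomial.eval_X, Polynomial.eval_C, norm_mul, norm_inv]
            have h1 : ‖z - x j‖ ≤ r := by
              rw [sub_eq_add_neg]
              exact le_trans (IsUltrametricDist.norm_add_le_max z (-x j))
                (max_le hz (by rw [norm_neg]; exact hx j))
            have h2 : δ ≤ ‖x i - x j‖ := hsep i j hij
            have h3 : 0 < ‖x i - x j‖ := lt_of_lt_of_le hδ h2
            calc ‖x i - x j‖⁻¹ * ‖z - x j‖ ≤ δ⁻¹ * r := by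
                  apply mul_le_mul _ h1 (norm_nonneg _) (by positivity)
                  exact inv_anti₀ hδ h2
              _ = r / δ := by ring
        _ = (r / δ) ^ d := by rw [Finset.prod_const, hcard]
    calc ‖P.eval (x i)‖ * ‖(Lagrange.basis Finset.univ x i).eval z‖
        ≤ (ε * M) * ((r / δ) ^ d) :=
          mul_le_mul (hval i) hbasis (norm_nonneg _) (by positivity)
      _ = ε * M * (r / δ) ^ d := by ring
  have hne : Nonempty {z : K // ‖z‖ ≤ r} := ⟨⟨0, by simp [hr.le]⟩⟩
  calc M = ⨆ z : {z : K // ‖z‖ ≤ r}, ‖P.eval z.1‖ := hM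
    _ ≤ ε * M * (r / δ) ^ d := ciSup_le fun z => key z.1 z.2
end

section
/- Fix r > 0 and real a ≥ 2. The set of ζ ∈ ℂ with |ζ| < r such that there exists a constant A > 0 with log|P(ζ)| ≥ -A·d·(d^{a-1}·log‖P‖ + d·log d + 1) for every nonzero P ∈ ℤ[z] of degree d ≥ 1, is of full Lebesgue measure in Δ_r. -/
open MeasureTheory

/-- The height of an integer polynomial: the maximum of the absolute values of
its coefficients. -/
noncomputable def heightZ (P : Polynomial ℤ) : ℕ :=
  P.support.sup fun i => (P.coeff i).natAbs

/-!
If `|P(ζ)| < ρ^d` for a polynomial `P` of degree `d` whose leading coefficient is a nonzero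
integer, then `ζ` lies within `ρ` of a root of `P`, so these `ζ` fill at most `d` discs of radius
`ρ`. For the points where `P` violates the bound with constant `A ≥ 2` one may take
`ρ² ≤ e^{-2A} / (d! · H^{2(d+1)})`, `H` the height of `P`. Since every coefficient `c` of `P` has
`max(|c|, 1)^{-2} ≥ H^{-2}`, and these weights have a finite sum `K` over `ℤ`, the discs of all
`P` have total area at most `e^{-2A} · π ∑_d K^{d+1} / d!`, which tends to `0` as `A → ∞`.
-/

open Polynomial Filter Topology
open scoped ENNReal Nat

theorem Polynomial.Splits.exists_mem_roots_norm_sub_lt {K : Type*} [NormedField K] {p : K[X]}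
    (hp : p.Splits) (hlc : 1 ≤ ‖p.leadingCoeff‖) {ζ : K} {ρ : ℝ} (hρ : 0 ≤ ρ)
    (h : ‖p.eval ζ‖ < ρ ^ p.natDegree) : ∃ z ∈ p.roots, ‖ζ - z‖ < ρ := by
  by_contra! hfar
  have hprod : ρ ^ p.natDegree ≤ (p.roots.map fun z => ‖ζ - z‖).prod := by
    simpa [hp.natDegree_eq_card_roots] using
      Multiset.prod_map_le_prod_map₀ (fun _ => ρ) _ (fun _ _ => hρ) hfar
  refine h.not_ge ?_
  have hnorm : ‖(p.roots.map (ζ - ·)).prod‖ = (p.roots.map fun z => ‖ζ - z‖).prod := by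
    simpa [Multiset.map_map] using map_multiset_prod normHom (p.roots.map (ζ - ·))
  rw [hp.eval_eq_prod_roots, norm_mul, hnorm]
  exact hprod.trans (le_mul_of_one_le_left ((pow_nonneg hρ _).trans hprod) hlc)

theorem Polynomial.volume_norm_eval_lt_pow_le {p : ℂ[X]} (hlc : 1 ≤ ‖p.leadingCoeff‖) {ρ : ℝ}
    (hρ : 0 ≤ ρ) :
    volume {ζ : ℂ | ‖p.eval ζ‖ < ρ ^ p.natDegree}
      ≤ p.natDegree * (ENNReal.ofReal ρ ^ 2 * NNReal.pi) := by
  have hsub : {ζ : ℂ | ‖p.eval ζ‖ < ρ ^ p.natDegree} ⊆ ⋃ z ∈ p.roots.toFinset, Metric.ball z ρ := by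
    intro ζ hζ
    obtain ⟨z, hz, hlt⟩ := (IsAlgClosed.splits p).exists_mem_roots_norm_sub_lt hlc hρ hζ
    exact Set.mem_biUnion (Multiset.mem_toFinset.mpr hz) (by rwa [Metric.mem_ball, dist_eq_norm])
  have hcard : (p.roots.toFinset.card : ℝ≥0∞) ≤ p.natDegree := by
    exact_mod_cast (Multiset.toFinset_card_le _).trans (card_roots' p)
  calc volume {ζ : ℂ | ‖p.eval ζ‖ < ρ ^ p.natDegree}
      ≤ ∑ z ∈ p.roots.toFinset, volume (Metric.ball z ρ) :=
        (measure_mono hsub).trans (measure_biUnion_finset_le _ _)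
    _ ≤ p.natDegree * (ENNReal.ofReal ρ ^ 2 * NNReal.pi) := by
        simpa [Complex.volume_ball] using mul_le_mul_left hcard _

theorem Polynomial.volume_norm_aeval_lt_pow_le {P : ℤ[X]} (hP : P ≠ 0) {ρ : ℝ} (hρ : 0 ≤ ρ) :
    volume {ζ : ℂ | ‖aeval ζ P‖ < ρ ^ P.natDegree}
      ≤ P.natDegree * (ENNReal.ofReal ρ ^ 2 * NNReal.pi) := by
  set p := P.map (Int.castRingHom ℂ)
  have hdeg : p.natDegree = P.natDegree := natDegree_map_eq_of_injective Int.cast_injective P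
  have hlc : 1 ≤ ‖p.leadingCoeff‖ := by
    rw [leadingCoeff_map_of_injective Int.cast_injective, eq_intCast, Complex.norm_intCast]
    exact_mod_cast Int.one_le_abs (leadingCoeff_ne_zero.mpr hP)
  simpa [p, hdeg, aeval_def, eval_map] using volume_norm_eval_lt_pow_le hlc hρ

instance Polynomial.countable {R : Type*} [Semiring R] [Countable R] : Countable R[X] :=
  Function.Injective.countable (f := fun P : R[X] => P.toFinsupp.coeff) fun P Q h => by
    simpa using h

theorem ENNReal.tsum_pi_prod_eq_pow {α : Type*} (f : α → ℝ≥0∞) (m : ℕ) :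
    ∑' c : Fin m → α, ∏ i, f (c i) = (∑' x, f x) ^ m := by
  induction m with
  | zero => simp
  | succ m ih =>
    rw [← (Fin.consEquiv fun _ => α).tsum_eq, ENNReal.tsum_prod', pow_succ',
      ← ih, ← ENNReal.tsum_mul_right]
    refine tsum_congr fun x => ?_
    rw [← ENNReal.tsum_mul_left]
    refine tsum_congr fun c => ?_
    simp [Fin.consEquiv, Fin.prod_univ_succ]

theorem ENNReal.tsum_pow_div_factorial_ne_top {K : ℝ≥0∞} (hK : K ≠ ⊤) :
    ∑' n : ℕ, K ^ n / n ! ≠ ⊤ := by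
  lift K to NNReal using hK
  have hsum : Summable fun n : ℕ => K ^ n / n ! := by
    simpa [← NNReal.summable_coe] using Real.summable_pow_div_factorial K
  convert ENNReal.tsum_coe_ne_top_iff_summable.mpr hsum using 3 with n
  rw [ENNReal.coe_div (by positivity)]
  simp

theorem Nat.mul_factorial_mul_pow_le {d : ℕ} (hd : 1 ≤ d) (H : ℕ) :
    d * d ! * H ^ (2 * (d + 1)) ≤ (d * H) ^ (4 * d) := by
  have hd' : d * d ! ≤ d ^ (4 * d) :=
    calc d * d ! ≤ d * d ^ d := Nat.mul_le_mul_left d d.factorial_le_pow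
      _ = d ^ (d + 1) := by ring
      _ ≤ d ^ (4 * d) := Nat.pow_le_pow_right hd (by omega)
  have hH : H ^ (2 * (d + 1)) ≤ H ^ (4 * d) := by
    rcases H.eq_zero_or_pos with rfl | hH
    · simp
    · exact Nat.pow_le_pow_right hH (by omega)
  rw [mul_pow]
  exact Nat.mul_le_mul hd' hH

theorem natCast_mul_pow_le_exp {a A : ℝ} (ha : 2 ≤ a) (hA : 2 ≤ A) {d H : ℕ} (hd : 1 ≤ d)
    (hH : 1 ≤ H) :
    ((d * H : ℕ) : ℝ) ^ (4 * d)
      ≤ Real.exp (2 * A * ((d : ℝ) ^ (a - 1) * Real.log H + d * Real.log d)) := by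
  have hd' : (1 : ℝ) ≤ d := by exact_mod_cast hd
  have hH' : (1 : ℝ) ≤ H := by exact_mod_cast hH
  have hlogd := Real.log_nonneg hd'
  have hlogH := Real.log_nonneg hH'
  have hdpow : (d : ℝ) ≤ (d : ℝ) ^ (a - 1) := by
    simpa using Real.rpow_le_rpow_of_exponent_le hd' (by linarith : (1 : ℝ) ≤ a - 1)
  have h1 : 0 ≤ (A - 2) * (d * Real.log d) := by positivity
  have h2 : 0 ≤ (A - 2) * (d * Real.log H) := by positivity
  have h3 : 0 ≤ A * (((d : ℝ) ^ (a - 1) - d) * Real.log H) :=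
    mul_nonneg (by linarith) (mul_nonneg (by linarith) hlogH)
  rw [← Real.log_le_iff_le_exp (by positivity), Real.log_pow]
  push_cast
  rw [Real.log_mul (by positivity) (by positivity)]
  nlinarith

theorem mul_exp_sq_le_exp_div {a A : ℝ} (ha : 2 ≤ a) (hA : 2 ≤ A) {d H : ℕ} (hd : 1 ≤ d)
    (hH : 1 ≤ H) :
    d * Real.exp (-A * ((d : ℝ) ^ (a - 1) * Real.log H + d * Real.log d + 1)) ^ 2
      ≤ Real.exp (-(2 * A)) / (d ! * H ^ (2 * (d + 1)) : ℕ) := by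
  have hN : (0 : ℝ) < (d ! * H ^ (2 * (d + 1)) : ℕ) := by positivity
  rw [le_div_iff₀ hN]
  calc d * Real.exp (-A * ((d : ℝ) ^ (a - 1) * Real.log H + d * Real.log d + 1)) ^ 2
        * (d ! * H ^ (2 * (d + 1)) : ℕ)
      = ((d * d ! * H ^ (2 * (d + 1)) : ℕ) : ℝ)
        * Real.exp (-A * ((d : ℝ) ^ (a - 1) * Real.log H + d * Real.log d + 1)) ^ 2 := by
        push_cast; ring
    _ ≤ Real.exp (2 * A * ((d : ℝ) ^ (a - 1) * Real.log H + d * Real.log d))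
        * Real.exp (-A * ((d : ℝ) ^ (a - 1) * Real.log H + d * Real.log d + 1)) ^ 2 := by
        gcongr
        exact le_trans (by exact_mod_cast Nat.mul_factorial_mul_pow_le hd H)
          (natCast_mul_pow_le_exp ha hA hd hH)
    _ = Real.exp (-(2 * A)) := by
        rw [← Real.exp_nat_mul, ← Real.exp_add]
        congr 1
        push_cast
        ring

theorem one_le_heightZ {P : ℤ[X]} (hP : P ≠ 0) : 1 ≤ heightZ P := by
  obtain ⟨i, hi⟩ := support_nonempty.mpr hP
  exact (Nat.one_le_iff_ne_zero.mpr (Int.natAbs_ne_zero.mpr (mem_support_iff.mp hi))).trans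
    (Finset.le_sup (f := fun i => (P.coeff i).natAbs) hi)

theorem natAbs_coeff_le_heightZ (P : ℤ[X]) (i : ℕ) : (P.coeff i).natAbs ≤ heightZ P := by
  by_cases hi : i ∈ P.support
  · exact Finset.le_sup (f := fun i => (P.coeff i).natAbs) hi
  · simp [notMem_support_iff.mp hi]

noncomputable def intWeight (k : ℤ) : ℝ≥0∞ := ((max k.natAbs 1 ^ 2 : ℕ) : ℝ≥0∞)⁻¹

theorem tsum_intWeight_ne_top : ∑' k, intWeight k ≠ ⊤ := by
  have hsum : Summable fun k : ℤ => ((max k.natAbs 1 ^ 2 : ℕ) : ℝ)⁻¹ := by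
    refine (Real.summable_one_div_int_pow.mpr one_lt_two).of_norm_bounded_eventually ?_
    filter_upwards [(Set.finite_singleton (0 : ℤ)).compl_mem_cofinite] with k hk
    have hk : 1 ≤ k.natAbs := Int.natAbs_pos.mpr hk
    simp [max_eq_left hk]
  have hofReal (k : ℤ) : intWeight k = ENNReal.ofReal ((max k.natAbs 1 ^ 2 : ℕ) : ℝ)⁻¹ := by
    rw [ENNReal.ofReal_inv_of_pos (by positivity), ENNReal.ofReal_natCast, intWeight]
  simp_rw [hofReal, ← ENNReal.ofReal_tsum_of_nonneg (fun _ => by positivity) hsum]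
  exact ENNReal.ofReal_ne_top

noncomputable def polyWeight (P : ℤ[X]) : ℝ≥0∞ :=
  ∏ i ∈ Finset.range (P.natDegree + 1), intWeight (P.coeff i)

theorem inv_heightZ_pow_le_polyWeight {P : ℤ[X]} (hP : P ≠ 0) :
    ((heightZ P ^ (2 * (P.natDegree + 1)) : ℕ) : ℝ≥0∞)⁻¹ ≤ polyWeight P := by
  calc ((heightZ P ^ (2 * (P.natDegree + 1)) : ℕ) : ℝ≥0∞)⁻¹
      = ((heightZ P ^ 2 : ℕ) : ℝ≥0∞)⁻¹ ^ (Finset.range (P.natDegree + 1)).card := by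
        rw [Finset.card_range, ← ENNReal.inv_pow, ← Nat.cast_pow, ← pow_mul]
    _ ≤ polyWeight P := by
        refine Finset.pow_card_le_prod _ _ _ fun i _ => ENNReal.inv_le_inv.mpr ?_
        exact_mod_cast Nat.pow_le_pow_left
          (max_le (natAbs_coeff_le_heightZ P i) (one_le_heightZ hP)) 2

theorem tsum_polyWeight_natDegree_eq_le (d : ℕ) :
    ∑' P : (natDegree ⁻¹' {d} : Set ℤ[X]), polyWeight P ≤ (∑' k, intWeight k) ^ (d + 1) := by
  have hinj : Function.Injective
      fun P : (natDegree ⁻¹' {d} : Set ℤ[X]) => fun i : Fin (d + 1) => P.1.coeff i := by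
    rintro ⟨P, hP : P.natDegree = d⟩ ⟨Q, hQ : Q.natDegree = d⟩ h
    refine Subtype.ext (Polynomial.ext fun i => ?_)
    change P.coeff i = Q.coeff i
    by_cases hi : i < d + 1
    · exact congrFun h ⟨i, hi⟩
    · rw [coeff_eq_zero_of_natDegree_lt (by omega), coeff_eq_zero_of_natDegree_lt (by omega)]
  calc ∑' P : (natDegree ⁻¹' {d} : Set ℤ[X]), polyWeight P
      = ∑' P : (natDegree ⁻¹' {d} : Set ℤ[X]), ∏ i : Fin (d + 1), intWeight (P.1.coeff i) := by
        refine tsum_congr fun P => ?_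
        rw [polyWeight, P.2, Fin.prod_univ_eq_prod_range (fun i => intWeight (P.1.coeff i))]
    _ ≤ ∑' c : Fin (d + 1) → ℤ, ∏ i, intWeight (c i) :=
        ENNReal.tsum_comp_le_tsum_of_injective hinj _
    _ = (∑' k, intWeight k) ^ (d + 1) := ENNReal.tsum_pi_prod_eq_pow _ _

theorem tsum_polyWeight_div_factorial_ne_top :
    ∑' P : ℤ[X], polyWeight P / P.natDegree ! ≠ ⊤ := by
  set K := ∑' k, intWeight k
  have hfiber (d : ℕ) : ∑' P : (natDegree ⁻¹' {d} : Set ℤ[X]), polyWeight P / P.1.natDegree !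
      ≤ K * (K ^ d / d !) := by
    calc ∑' P : (natDegree ⁻¹' {d} : Set ℤ[X]), polyWeight P / P.1.natDegree !
        = (∑' P : (natDegree ⁻¹' {d} : Set ℤ[X]), polyWeight P) / d ! := by
          simp only [div_eq_mul_inv, ← ENNReal.tsum_mul_right]
          exact tsum_congr fun P => by rw [P.2]
      _ ≤ K ^ (d + 1) / d ! := by gcongr; exact tsum_polyWeight_natDegree_eq_le d
      _ = K * (K ^ d / d !) := by rw [pow_succ', mul_div_assoc]
  rw [← ENNReal.tsum_fiberwise _ natDegree]
  refine ne_top_of_le_ne_top ?_ (ENNReal.tsum_le_tsum hfiber)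
  rw [ENNReal.tsum_mul_left]
  exact ENNReal.mul_ne_top tsum_intWeight_ne_top
    (ENNReal.tsum_pow_div_factorial_ne_top tsum_intWeight_ne_top)

noncomputable def smallValueSet (a A : ℝ) (P : ℤ[X]) : Set ℂ :=
  {ζ | 1 ≤ P.natDegree ∧ Real.log ‖aeval ζ P‖ < -A * P.natDegree *
    ((P.natDegree : ℝ) ^ (a - 1) * Real.log (heightZ P) + P.natDegree * Real.log P.natDegree + 1)}

theorem volume_smallValueSet_le {a A : ℝ} (ha : 2 ≤ a) (hA : 2 ≤ A) (P : ℤ[X]) :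
    volume (smallValueSet a A P)
      ≤ ENNReal.ofReal (Real.exp (-(2 * A))) * NNReal.pi * (polyWeight P / P.natDegree !) := by
  set d := P.natDegree
  set H := heightZ P
  by_cases hd : 1 ≤ d
  swap
  · simp [smallValueSet, d, hd]
  have hP : P ≠ 0 := ne_zero_of_natDegree_gt hd
  have hH : 1 ≤ H := one_le_heightZ hP
  set ρ := Real.exp (-A * ((d : ℝ) ^ (a - 1) * Real.log H + d * Real.log d + 1))
  have hsub : smallValueSet a A P ⊆ {ζ : ℂ | ‖aeval ζ P‖ < ρ ^ d} := by
    rintro ζ ⟨-, hζ⟩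
    change ‖aeval ζ P‖ < ρ ^ d
    rcases (norm_nonneg (aeval ζ P)).eq_or_lt with h | h
    · rw [← h]
      positivity
    · rw [← Real.exp_nat_mul, ← Real.log_lt_iff_lt_exp h]
      linarith
  have hN : (0 : ℝ) < (d ! * H ^ (2 * (d + 1)) : ℕ) := by positivity
  calc volume (smallValueSet a A P)
      ≤ d * (ENNReal.ofReal ρ ^ 2 * NNReal.pi) :=
        (measure_mono hsub).trans (volume_norm_aeval_lt_pow_le hP (Real.exp_pos _).le)
    _ = ENNReal.ofReal (d * ρ ^ 2) * NNReal.pi := by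
        rw [ENNReal.ofReal_mul (by positivity), ENNReal.ofReal_pow (by positivity),
          ENNReal.ofReal_natCast, mul_assoc]
    _ ≤ ENNReal.ofReal (Real.exp (-(2 * A)) / (d ! * H ^ (2 * (d + 1)) : ℕ)) * NNReal.pi := by
        gcongr
        exact mul_exp_sq_le_exp_div ha hA hd hH
    _ = ENNReal.ofReal (Real.exp (-(2 * A))) * NNReal.pi
          * (((H ^ (2 * (d + 1)) : ℕ) : ℝ≥0∞)⁻¹ / d !) := by
        rw [ENNReal.ofReal_div_of_pos hN, ENNReal.ofReal_natCast, Nat.cast_mul,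
          ENNReal.div_eq_inv_mul, ENNReal.mul_inv (by simp) (by simp), ENNReal.div_eq_inv_mul]
        ring
    _ ≤ ENNReal.ofReal (Real.exp (-(2 * A))) * NNReal.pi * (polyWeight P / d !) := by
        gcongr
        exact inv_heightZ_pow_le_polyWeight hP

theorem S_points_full_in_disk_general (r : ℝ) (a : ℝ) (ha : 2 ≤ a) :
    volume {ζ : ℂ | ‖ζ‖ < r ∧
      ¬ ∃ A > (0 : ℝ), ∀ P : Polynomial ℤ, P ≠ 0 → 1 ≤ P.natDegree →
        Real.log ‖Polynomial.aeval ζ P‖ ≥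
          -A * (P.natDegree : ℝ) *
            ((P.natDegree : ℝ) ^ (a - 1) * Real.log (heightZ P)
              + (P.natDegree : ℝ) * Real.log (P.natDegree : ℝ) + 1)} = 0 := by
  set C := ∑' P : ℤ[X], (polyWeight P / P.natDegree !)
  have hlim : Tendsto (fun A : ℝ => ENNReal.ofReal (Real.exp (-(2 * A))) * NNReal.pi * C)
      atTop (𝓝 0) := by
    have hexp : Tendsto (fun A : ℝ => ENNReal.ofReal (Real.exp (-(2 * A)))) atTop (𝓝 0) := by
      simpa using ENNReal.tendsto_ofReal (Real.tendsto_exp_atBot.comp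
        (tendsto_neg_atTop_atBot.comp (tendsto_id.const_mul_atTop two_pos)))
    simpa using ENNReal.Tendsto.mul_const (ENNReal.Tendsto.mul_const hexp
      (Or.inr ENNReal.coe_ne_top)) (Or.inr tsum_polyWeight_div_factorial_ne_top)
  refine le_antisymm (ge_of_tendsto hlim ((eventually_ge_atTop 2).mono fun A hA => ?_)) zero_le
  calc _ ≤ volume (⋃ P, smallValueSet a A P) := by
        refine measure_mono fun ζ hζ => ?_
        have hsmall := hζ.2
        push Not at hsmall
        obtain ⟨P, -, hd, hlt⟩ := hsmall A (by linarith)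
        exact Set.mem_iUnion.mpr ⟨P, hd, hlt⟩
    _ ≤ ∑' P, volume (smallValueSet a A P) := measure_iUnion_le _
    _ ≤ ∑' P, ENNReal.ofReal (Real.exp (-(2 * A))) * NNReal.pi * (polyWeight P / P.natDegree !) :=
        ENNReal.tsum_le_tsum fun P => volume_smallValueSet_le ha hA P
    _ = _ := ENNReal.tsum_mul_left

/-- Almost every `ζ` in the disk of radius `r` is of type `S¹_a(ℂ)`: there is
`A > 0` with `log|P(ζ)| ≥ -A·d·(d^{a-1}·log‖P‖ + d·log d + 1)` for every nonzero
integer polynomial `P` of degree `d ≥ 1`. -/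
theorem S_points_full_in_disk (r : ℝ) (hr : 0 < r) (a : ℝ) (ha : 2 ≤ a) :
    volume {ζ : ℂ | ‖ζ‖ < r ∧
      ¬ ∃ A > (0 : ℝ), ∀ P : Polynomial ℤ, P ≠ 0 → 1 ≤ P.natDegree →
        Real.log ‖Polynomial.aeval ζ P‖ ≥
          -A * (P.natDegree : ℝ) *
            ((P.natDegree : ℝ) ^ (a - 1) * Real.log (heightZ P)
              + (P.natDegree : ℝ) * Real.log (P.natDegree : ℝ) + 1)} = 0 :=
  S_points_full_in_disk_general r a ha
end
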